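/- Let μ ∈ ℂ with Re μ > 0, |λ| < 1, and let a lie in the closed unit disk. Then the function H_{a,λ} belongs to F_μ(λ); in fact, for all z ∈ D, (2π/μ)·(z H_{a,λ}'(z)/H_{a,λ}(z)) + (1+z)/(1−z) = (1 + δ(az,λ)·z)/(1 − δ(az,λ)·z), where δ(w,λ) = (w + λ)/(1 + conj(λ)·w). -/

import Mathlib

open Complex Set Metric

noncomputable section

/-- The open unit disk in `ℂ`. -/
def unitDisk : Set ℂ := Metric.ball (0 : ℂ) 1

/-- `P_f(z) = (2π/μ)·(z f'(z)/f(z)) + (1+z)/(1−z)`. -/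
def Pfun (μ : ℂ) (f : ℂ → ℂ) (z : ℂ) : ℂ :=
  2 * (Real.pi : ℂ) / μ * (z * deriv f z / f z) + (1 + z) / (1 - z)

/-- Membership in the class `F_μ`: analytic, non-vanishing on the disk, `f(0) = 1`,
and `Re P_f > 0` on the disk. -/
def memF (μ : ℂ) (f : ℂ → ℂ) : Prop :=
  AnalyticOnNhd ℂ f unitDisk ∧ (∀ z ∈ unitDisk, f z ≠ 0) ∧ f 0 = 1 ∧
    ∀ z ∈ unitDisk, 0 < (Pfun μ f z).re

/-- Membership in the class `F_μ(λ)`: `f ∈ F_μ` with `f'(0) = (μ/π)(λ − 1)`. -/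
def memFlam (μ lam : ℂ) (f : ℂ → ℂ) : Prop :=
  memF μ f ∧ deriv f 0 = μ / (Real.pi : ℂ) * (lam - 1)

/-- The branch of `log f` vanishing at `0`: `log f(z) = ∫₀^z f'(ζ)/f(ζ) dζ`
(integral over the segment from `0` to `z`). -/
def logf (f : ℂ → ℂ) (z : ℂ) : ℂ :=
  ∫ t in (0:ℝ)..1, deriv f (t * z) / f (t * z) * z

/-- The region of variability `V(z₀, λ) = {log f(z₀) : f ∈ F_μ(λ)}`. -/
def Vset (μ lam z₀ : ℂ) : Set ℂ := {w | ∃ f, memFlam μ lam f ∧ w = logf f z₀}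

/-- `δ(w, λ) = (w + λ)/(1 + conj(λ) w)`. -/
def dl (lam w : ℂ) : ℂ := (w + lam) / (1 + (starRingEnd ℂ) lam * w)

/-- `log H_{a,λ}(z) = (μ/π)·∫₀^z (δ(aζ,λ) − 1)/((1 − δ(aζ,λ)ζ)(1 − ζ)) dζ`
(integral over the segment from `0` to `z`). -/
def Hlog (μ lam a z : ℂ) : ℂ :=
  μ / (Real.pi : ℂ) *
    ∫ t in (0:ℝ)..1,
      (dl lam (a * (t * z)) - 1) /
        ((1 - dl lam (a * (t * z)) * (t * z)) * (1 - t * z)) * z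

/-- The function `H_{a,λ}(z) = exp(log H_{a,λ}(z))`. -/
def Hfun (μ lam a z : ℂ) : ℂ := Complex.exp (Hlog μ lam a z)

/-- `c(z, λ)`. -/
def cfun (z lam : ℂ) : ℂ :=
  ((‖z‖ : ℂ) ^ 2 * ((starRingEnd ℂ) z - lam) * (1 - (starRingEnd ℂ) lam)
      - (1 - lam) * (1 - (starRingEnd ℂ) lam * (starRingEnd ℂ) z)) /
    ((1 - z) * (1 - (‖z‖ : ℂ) ^ 2)
      * (1 + (‖z‖ : ℂ) ^ 2 - 2 * ((lam * z).re : ℂ)))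

/-- `r(z, λ)`. -/
def rfun (z lam : ℂ) : ℝ :=
  (1 - ‖lam‖ ^ 2) * ‖z‖ /
    ((1 - ‖z‖ ^ 2) * (1 + ‖z‖ ^ 2 - 2 * (lam * z).re))

/-- A starlike univalent function on the unit disk: analytic, `φ(0) = 0`, `φ'(0) = 1`,
univalent, and `Re(z φ'(z)/φ(z)) > 0` on the disk. -/
def IsStarlike (φ : ℂ → ℂ) : Prop :=
  AnalyticOnNhd ℂ φ unitDisk ∧ φ 0 = 0 ∧ deriv φ 0 = 1 ∧
    Set.InjOn φ unitDisk ∧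
    ∀ z ∈ unitDisk, z ≠ 0 → 0 < (z * deriv φ z / φ z).re

/-- `G(z) = (μ/π)·∫₀^z e^{iθ}ζ/(1 + (conj(λ)e^{iθ} − λ)ζ − e^{iθ}ζ²)² dζ`
(integral over the segment from `0` to `z`). -/
def Gfun (μ lam : ℂ) (θ : ℝ) (z : ℂ) : ℂ :=
  μ / (Real.pi : ℂ) *
    ∫ t in (0:ℝ)..1,
      Complex.exp (θ * Complex.I) * (t * z) /
        (1 + ((starRingEnd ℂ) lam * Complex.exp (θ * Complex.I) - lam) * (t * z)
          - Complex.exp (θ * Complex.I) * (t * z) ^ 2) ^ 2 * z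

end

/-!
The integrand `h` of `log H_{a,λ}` is holomorphic on the disk, so the segment integral
`z ↦ ∫₀¹ h(tz) z dt` differs from a primitive of `h` (which exists on a disk) by a constant.
Hence `z H'/H = (μ/π) z h(z)`, and the formula for `P_H` is an algebraic identity.
Since `δ(·, λ)` maps the disk into itself, `w = δ(az, λ) z` lies in the disk, so
`Re P_H = Re ((1 + w)/(1 - w)) > 0`.
-/

open Topology

section SegmentIntegral

variable {f : ℂ → ℂ} {r : ℝ} {z : ℂ}

lemma integral_mul_segment_eq_sub {g : ℂ → ℂ}
    (hg : ∀ w ∈ ball (0 : ℂ) r, HasDerivAt g (f w) w) (hf : ContinuousOn f (ball 0 r))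
    (hz : z ∈ ball 0 r) :
    ∫ t in (0 : ℝ)..1, f (t * z) * z = g z - g 0 := by
  have hseg : ∀ t ∈ uIcc (0 : ℝ) 1, (t : ℂ) * z ∈ ball (0 : ℂ) r := by
    intro t ht
    rw [uIcc_of_le zero_le_one] at ht
    rw [mem_ball_zero_iff] at hz ⊢
    rw [norm_mul, Complex.norm_real, Real.norm_of_nonneg ht.1]
    exact lt_of_le_of_lt (mul_le_of_le_one_left (norm_nonneg z) ht.2) hz
  have hline : Continuous fun t : ℝ => (t : ℂ) * z := by fun_prop
  have hderiv : ∀ t ∈ uIcc (0 : ℝ) 1,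
      HasDerivAt (fun s : ℝ => g (s * z)) (f (t * z) * z) t := fun t ht => by
    simpa using
      ((hg _ (hseg t ht)).comp (t : ℂ) ((hasDerivAt_id (t : ℂ)).mul_const z)).comp_ofReal
  have hint : IntervalIntegrable (fun t : ℝ => f (t * z) * z) MeasureTheory.volume 0 1 :=
    ((hf.comp hline.continuousOn hseg).mul continuousOn_const).intervalIntegrable
  simpa using intervalIntegral.integral_eq_sub_of_hasDerivAt hderiv hint

lemma hasDerivAt_integral_mul_segment (hf : DifferentiableOn ℂ f (ball 0 r))
    (hz : z ∈ ball 0 r) :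
    HasDerivAt (fun x => ∫ t in (0 : ℝ)..1, f (t * x) * x) (f z) z := by
  obtain ⟨g, hg⟩ := hf.isExactOn_ball
  have hprim : (fun x => ∫ t in (0 : ℝ)..1, f (t * x) * x) =ᶠ[𝓝 z] fun x => g x - g 0 :=
    Filter.eventually_of_mem (isOpen_ball.mem_nhds hz) fun x hx =>
      integral_mul_segment_eq_sub hg hf.continuousOn hx
  exact ((hg z hz).sub_const (g 0)).congr_of_eventuallyEq hprim

end SegmentIntegral

section Disk

variable {lam w : ℂ}

lemma one_sub_ne_zero_of_norm_lt_one (hw : ‖w‖ < 1) : 1 - w ≠ 0 := by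
  rw [sub_ne_zero]
  rintro rfl
  simp at hw

lemma re_one_add_div_one_sub_pos (hw : ‖w‖ < 1) : 0 < ((1 + w) / (1 - w)).re := by
  have hnum : (1 + w).re * (1 - w).re + (1 + w).im * (1 - w).im = 1 - ‖w‖ ^ 2 := by
    rw [Complex.sq_norm, Complex.normSq_apply]
    simp only [Complex.add_re, Complex.add_im, Complex.sub_re, Complex.sub_im, Complex.one_re,
      Complex.one_im]
    ring
  rw [Complex.div_re, ← add_div, hnum]
  exact div_pos (by nlinarith [norm_nonneg w])
    (Complex.normSq_pos.mpr (one_sub_ne_zero_of_norm_lt_one hw))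

lemma normSq_one_add_conj_mul_sub_normSq_add (lam w : ℂ) :
    Complex.normSq (1 + (starRingEnd ℂ) lam * w) - Complex.normSq (w + lam) =
      (1 - Complex.normSq lam) * (1 - Complex.normSq w) := by
  simp only [Complex.normSq_apply, Complex.add_re, Complex.add_im, Complex.mul_re,
    Complex.mul_im, Complex.conj_re, Complex.conj_im, Complex.one_re, Complex.one_im]
  ring

lemma one_add_conj_mul_ne_zero (hlam : ‖lam‖ < 1) (hw : ‖w‖ < 1) :
    1 + (starRingEnd ℂ) lam * w ≠ 0 := by
  rw [← sub_neg_eq_add]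
  apply one_sub_ne_zero_of_norm_lt_one
  rw [norm_neg, norm_mul, Complex.norm_conj]
  nlinarith [norm_nonneg lam, norm_nonneg w]

lemma norm_dl_lt_one (hlam : ‖lam‖ < 1) (hw : ‖w‖ < 1) : ‖dl lam w‖ < 1 := by
  have hden := norm_pos_iff.mpr (one_add_conj_mul_ne_zero hlam hw)
  rw [dl, norm_div, div_lt_one hden, ← sq_lt_sq₀ (norm_nonneg _) hden.le, Complex.sq_norm,
    Complex.sq_norm, ← sub_pos, normSq_one_add_conj_mul_sub_normSq_add]
  rw [← Complex.sq_norm, ← Complex.sq_norm]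
  apply mul_pos <;> nlinarith [norm_nonneg lam, norm_nonneg w]

lemma differentiableAt_dl (hlam : ‖lam‖ < 1) (hw : ‖w‖ < 1) : DifferentiableAt ℂ (dl lam) w :=
  (by fun_prop : DifferentiableAt ℂ (· + lam) w).div (by fun_prop)
    (one_add_conj_mul_ne_zero hlam hw)

end Disk

noncomputable def HlogIntegrand (lam a w : ℂ) : ℂ :=
  (dl lam (a * w) - 1) / ((1 - dl lam (a * w) * w) * (1 - w))

section Hfun

variable {μ lam a z : ℂ}

lemma norm_dl_mul_self_lt_one (hlam : ‖lam‖ < 1) (ha : ‖a‖ ≤ 1) (hz : ‖z‖ < 1) :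
    ‖dl lam (a * z) * z‖ < 1 := by
  have haz : ‖a * z‖ < 1 := by
    rw [norm_mul]; nlinarith [norm_nonneg a, norm_nonneg z]
  have hd := norm_dl_lt_one hlam haz
  rw [norm_mul]
  nlinarith [norm_nonneg (dl lam (a * z)), norm_nonneg z]

lemma differentiableOn_HlogIntegrand (hlam : ‖lam‖ < 1) (ha : ‖a‖ ≤ 1) :
    DifferentiableOn ℂ (HlogIntegrand lam a) (ball 0 1) := by
  intro w hw
  rw [mem_ball_zero_iff] at hw
  have haw : ‖a * w‖ < 1 := by
    rw [norm_mul]; nlinarith [norm_nonneg a, norm_nonneg w]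
  have hdl : DifferentiableAt ℂ (fun w => dl lam (a * w)) w :=
    (differentiableAt_dl hlam haw).comp w (by fun_prop)
  refine DifferentiableAt.differentiableWithinAt (DifferentiableAt.div (by fun_prop)
    (by fun_prop) (mul_ne_zero ?_ ?_))
  · exact one_sub_ne_zero_of_norm_lt_one (norm_dl_mul_self_lt_one hlam ha hw)
  · exact one_sub_ne_zero_of_norm_lt_one hw

lemma hasDerivAt_Hfun (hlam : ‖lam‖ < 1) (ha : ‖a‖ ≤ 1) (hz : z ∈ ball 0 1) :
    HasDerivAt (Hfun μ lam a) (Hfun μ lam a z * (μ / Real.pi * HlogIntegrand lam a z)) z :=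
  (((hasDerivAt_integral_mul_segment (differentiableOn_HlogIntegrand hlam ha) hz).const_mul
    (μ / Real.pi))).cexp

lemma Hfun_zero : Hfun μ lam a 0 = 1 := by
  simp [Hfun, Hlog]

lemma Pfun_Hfun (hμ : μ ≠ 0) (hlam : ‖lam‖ < 1) (ha : ‖a‖ ≤ 1) (hz : z ∈ unitDisk) :
    Pfun μ (Hfun μ lam a) z = (1 + dl lam (a * z) * z) / (1 - dl lam (a * z) * z) := by
  have hz' : ‖z‖ < 1 := mem_ball_zero_iff.mp hz
  have hd := one_sub_ne_zero_of_norm_lt_one (norm_dl_mul_self_lt_one hlam ha hz')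
  have h1 := one_sub_ne_zero_of_norm_lt_one hz'
  rw [Pfun, (hasDerivAt_Hfun hlam ha hz).deriv, HlogIntegrand]
  have hH : Hfun μ lam a z ≠ 0 := Complex.exp_ne_zero _
  generalize dl lam (a * z) = d at hd ⊢
  calc 2 * Real.pi / μ *
          (z * (Hfun μ lam a z * (μ / Real.pi * ((d - 1) / ((1 - d * z) * (1 - z))))) /
            Hfun μ lam a z) + (1 + z) / (1 - z)
      = 2 * z * (d - 1) / ((1 - d * z) * (1 - z)) + (1 + z) / (1 - z) := by
        congr 1
        field_simp
    _ = (2 * z * (d - 1) + (1 + z) * (1 - d * z)) / ((1 - d * z) * (1 - z)) := by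
        rw [div_add_div _ _ (mul_ne_zero hd h1) h1,
          div_eq_div_iff (mul_ne_zero (mul_ne_zero hd h1) h1) (mul_ne_zero hd h1)]
        ring
    _ = (1 + d * z) / (1 - d * z) := by
        rw [div_eq_div_iff (mul_ne_zero hd h1) hd]
        ring

end Hfun

theorem stmt14 (μ lam a : ℂ) (hμ : 0 < μ.re) (hlam : ‖lam‖ < 1)
    (ha : ‖a‖ ≤ 1) :
    memFlam μ lam (Hfun μ lam a) ∧
    ∀ z ∈ unitDisk,
      2 * (Real.pi : ℂ) / μ * (z * deriv (Hfun μ lam a) z / Hfun μ lam a z)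
          + (1 + z) / (1 - z) =
        (1 + dl lam (a * z) * z) / (1 - dl lam (a * z) * z) := by
  have hμ0 : μ ≠ 0 := by
    rintro rfl
    simp at hμ
  have hP := fun z (hz : z ∈ unitDisk) => Pfun_Hfun hμ0 hlam ha hz
  refine ⟨⟨⟨?_, fun z _ => Complex.exp_ne_zero _, Hfun_zero, fun z hz => ?_⟩, ?_⟩, hP⟩
  · exact DifferentiableOn.analyticOnNhd
      (fun z hz => (hasDerivAt_Hfun hlam ha hz).differentiableAt.differentiableWithinAt)
      isOpen_ball
  · rw [hP z hz]
    exact re_one_add_div_one_sub_pos (norm_dl_mul_self_lt_one hlam ha (mem_ball_zero_iff.mp hz))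
  · rw [(hasDerivAt_Hfun hlam ha (mem_ball_self one_pos)).deriv, Hfun_zero]
    simp [HlogIntegrand, dl]
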